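/- arXiv:2309.14297 — 6 statements merged into one kernel-verified Lean document; each statement's English description precedes it below -/
import Mathlib

section
/- Under a single tie-breaking (STB) lottery with lottery cutoffs λ_c ∈ [0,1] for each school c, if a student's feasible set of schools is determined by a single uniform draw U ∈ [0,1] (school c is feasible iff U > ℓ_c where each ℓ_c ∈ {0, λ_c, 1}), then whenever the events {U > max(ℓ_a, ℓ_b) and U < min_{c∈C'} ℓ_c conditioned separately on a and on b} each have positive probability, the joint event {ℓ_a < U, ℓ_b < U, and U < ℓ_c for all c ∈ C'} has probability at least β := min{|λ_c − λ_{c'}| : c, c' ∈ C ∪ {x,y}, λ_c ≠ λ_{c'}} > 0, where λ_x := 0 and λ_y := 1. -/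
open MeasureTheory

/-- Under a single tie-breaking lottery, the joint event that schools `a` and `b`
are both feasible while all schools in `C'` are infeasible has probability at least
the minimum gap `β` between distinct lottery cutoffs (augmented with 0 and 1),
whenever each of the two corresponding single-school events has positive probability;
moreover `β > 0`. -/
theorem stmt_1 {C : Type*} [Fintype C]
    (lam : C → ℝ) (hlam : ∀ c, lam c ∈ Set.Icc (0 : ℝ) 1)
    (ℓ : C → ℝ) (hℓ : ∀ c, ℓ c = 0 ∨ ℓ c = lam c ∨ ℓ c = 1)
    (a b : C) (C' : Finset C)
    (ha : 0 < volume {u : ℝ | u ∈ Set.Icc (0 : ℝ) 1 ∧ ℓ a < u ∧ ∀ c ∈ C', u < ℓ c})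
    (hb : 0 < volume {u : ℝ | u ∈ Set.Icc (0 : ℝ) 1 ∧ ℓ b < u ∧ ∀ c ∈ C', u < ℓ c}) :
    0 < sInf {x : ℝ | ∃ v ∈ insert (0 : ℝ) (insert 1 (Set.range lam)),
        ∃ w ∈ insert (0 : ℝ) (insert 1 (Set.range lam)), v ≠ w ∧ x = |v - w|} ∧
    ENNReal.ofReal
        (sInf {x : ℝ | ∃ v ∈ insert (0 : ℝ) (insert 1 (Set.range lam)),
          ∃ w ∈ insert (0 : ℝ) (insert 1 (Set.range lam)), v ≠ w ∧ x = |v - w|}) ≤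
      volume {u : ℝ | u ∈ Set.Icc (0 : ℝ) 1 ∧ ℓ a < u ∧ ℓ b < u ∧ ∀ c ∈ C', u < ℓ c} := by
  classical
  set S : Set ℝ := insert (0 : ℝ) (insert 1 (Set.range lam)) with hS
  set G : Set ℝ := {x : ℝ | ∃ v ∈ S, ∃ w ∈ S, v ≠ w ∧ x = |v - w|} with hG
  have hSfin : S.Finite := ((Set.finite_range lam).insert 1).insert 0
  have hGfin : G.Finite := by
    have hsub : G ⊆ Set.image2 (fun v w => |v - w|) S S := by
      rintro x ⟨v, hv, w, hw, _, rfl⟩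
      exact ⟨v, hv, w, hw, rfl⟩
    exact (hSfin.image2 _ hSfin).subset hsub
  have h0S : (0 : ℝ) ∈ S := Set.mem_insert _ _
  have h1S : (1 : ℝ) ∈ S := Set.mem_insert_of_mem _ (Set.mem_insert _ _)
  have hGne : G.Nonempty := ⟨1, 1, h1S, 0, h0S, by norm_num, by norm_num⟩
  have hGpos : ∀ x ∈ G, 0 < x := by
    rintro x ⟨v, hv, w, hw, hvw, rfl⟩
    exact abs_pos.mpr (sub_ne_zero.mpr hvw)
  have hβpos : 0 < sInf G := hGpos _ (hGne.csInf_mem hGfin)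
  have hℓ01 : ∀ c, ℓ c ∈ Set.Icc (0 : ℝ) 1 := by
    intro c
    rcases hℓ c with h | h | h
    · rw [h]; exact ⟨le_refl 0, zero_le_one⟩
    · rw [h]; exact hlam c
    · rw [h]; exact ⟨zero_le_one, le_refl 1⟩
  have hℓS : ∀ c, ℓ c ∈ S := by
    intro c
    rcases hℓ c with h | h | h
    · rw [h]; exact h0S
    · rw [h]; exact Set.mem_insert_of_mem _ (Set.mem_insert_of_mem _ ⟨c, rfl⟩)
    · rw [h]; exact h1S
  set F : Finset ℝ := insert 1 (C'.image ℓ) with hF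
  have hFne : F.Nonempty := ⟨1, Finset.mem_insert_self _ _⟩
  set M : ℝ := F.min' hFne with hM
  have hM1 : M ≤ 1 := Finset.min'_le _ _ (Finset.mem_insert_self _ _)
  have hMc : ∀ c ∈ C', M ≤ ℓ c := fun c hc =>
    Finset.min'_le _ _ (Finset.mem_insert_of_mem (Finset.mem_image_of_mem _ hc))
  have hMS : M ∈ S := by
    have hmem : M = 1 ∨ ∃ c ∈ C', ℓ c = M := by
      have h := F.min'_mem hFne
      simpa [hF, Finset.mem_insert, Finset.mem_image, eq_comm] using h
    rcases hmem with h | ⟨c, _, hc⟩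
    · rw [h]; exact h1S
    · rw [← hc]; exact hℓS c
  -- u in the single-school event implies u ≤ M
  have key : ∀ u : ℝ, u ∈ Set.Icc (0 : ℝ) 1 → (∀ c ∈ C', u < ℓ c) → u ≤ M := by
    intro u hu hc
    apply Finset.le_min'
    intro y hy
    rcases Finset.mem_insert.mp hy with h | h
    · rw [h]; exact hu.2
    · rcases Finset.mem_image.mp h with ⟨c, hcC, hceq⟩
      rw [← hceq]; exact le_of_lt (hc c hcC)
  have haM : ℓ a < M := by
    by_contra h
    push_neg at h
    have hsub : {u : ℝ | u ∈ Set.Icc (0 : ℝ) 1 ∧ ℓ a < u ∧ ∀ c ∈ C', u < ℓ c} ⊆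
        Set.Ioc (ℓ a) M := fun u ⟨hu, h1, h2⟩ => ⟨h1, key u hu h2⟩
    have := (measure_mono hsub).trans_lt' ha
    rw [Real.volume_Ioc] at this
    have : (0 : ℝ) < M - ℓ a := by
      by_contra hle
      push_neg at hle
      rw [ENNReal.ofReal_eq_zero.mpr hle] at this
      exact lt_irrefl _ this
    linarith
  have hbM : ℓ b < M := by
    by_contra h
    push_neg at h
    have hsub : {u : ℝ | u ∈ Set.Icc (0 : ℝ) 1 ∧ ℓ b < u ∧ ∀ c ∈ C', u < ℓ c} ⊆
        Set.Ioc (ℓ b) M := fun u ⟨hu, h1, h2⟩ => ⟨h1, key u hu h2⟩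
    have := (measure_mono hsub).trans_lt' hb
    rw [Real.volume_Ioc] at this
    have : (0 : ℝ) < M - ℓ b := by
      by_contra hle
      push_neg at hle
      rw [ENNReal.ofReal_eq_zero.mpr hle] at this
      exact lt_irrefl _ this
    linarith
  set L : ℝ := max (ℓ a) (ℓ b) with hL
  have hLM : L < M := max_lt haM hbM
  have hLS : L ∈ S := by
    rcases max_cases (ℓ a) (ℓ b) with ⟨h, _⟩ | ⟨h, _⟩
    · rw [hL, h]; exact hℓS a
    · rw [hL, h]; exact hℓS b
  have hL0 : 0 ≤ L := le_trans (hℓ01 a).1 (le_max_left _ _)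
  have hsubJ : Set.Ioo L M ⊆
      {u : ℝ | u ∈ Set.Icc (0 : ℝ) 1 ∧ ℓ a < u ∧ ℓ b < u ∧ ∀ c ∈ C', u < ℓ c} := by
    rintro u ⟨h1, h2⟩
    refine ⟨⟨le_trans hL0 (le_of_lt h1), le_trans (le_of_lt h2) hM1⟩,
      lt_of_le_of_lt (le_max_left _ _) h1,
      lt_of_le_of_lt (le_max_right _ _) h1, fun c hc => lt_of_lt_of_le h2 (hMc c hc)⟩
  have hβle : sInf G ≤ M - L := by
    apply csInf_le hGfin.bddBelow
    exact ⟨M, hMS, L, hLS, ne_of_gt hLM, by rw [abs_of_pos (sub_pos.mpr hLM)]⟩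
  refine ⟨hβpos, ?_⟩
  calc ENNReal.ofReal (sInf G) ≤ ENNReal.ofReal (M - L) := ENNReal.ofReal_le_ofReal hβle
    _ = volume (Set.Ioo L M) := (Real.volume_Ioo).symm
    _ ≤ _ := measure_mono hsubJ
end

section
/- TEPS inference is contained in WTT inference: for a student submitting rank-order list R, every preference pair (c, c') inferred by TEPS^all (the transitive closure of stability-revealed relations over all uncertainties) satisfies: c is ranked in R, and c' is either ranked strictly below c in R or is unranked. Hence TEPS^all ⊆ P^WTT, where P^WTT declares every ranked school preferred to every lower-ranked school and to every unranked school. -/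
/-- TEPS inference is contained in WTT inference: every pair `(x, y)` in the TEPS
transitive closure has `x` ranked on the ROL, and `y` either unranked or ranked
strictly below `x` (lower rank = larger `pos` value). Here `α W` is the ROL-maximal
ranked school in the feasible set `B W`. -/
theorem stmt_7 {C : Type*} {ι : Type*}
    (Ranked : Set C) (pos : C → ℕ) (hinj : Set.InjOn pos Ranked)
    (B : ι → Set C) (α : ι → C)
    (hmem : ∀ W, α W ∈ B W)
    (hrk : ∀ W, α W ∈ Ranked)
    (hmax : ∀ W, ∀ c ∈ B W, c ∈ Ranked → pos (α W) ≤ pos c) :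
    ∀ x y, Relation.TransGen (fun x y => ∃ W, x = α W ∧ y ∈ B W ∧ y ≠ α W) x y →
      x ∈ Ranked ∧ (y ∉ Ranked ∨ (y ∈ Ranked ∧ pos x < pos y)) := by
  intro x y h
  induction h with
  | @single b h =>
      obtain ⟨W, rfl, hyB, hyne⟩ := h
      refine ⟨hrk W, ?_⟩
      by_cases hy : b ∈ Ranked
      · exact Or.inr ⟨hy, lt_of_le_of_ne (hmax W b hyB hy)
          (fun he => hyne (hinj hy (hrk W) he.symm))⟩
      · exact Or.inl hy
  | @tail b c _ h ih =>
      obtain ⟨W, rfl, hzB, hzne⟩ := h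
      obtain ⟨hx, hmid⟩ := ih
      have hxlt : pos x < pos (α W) := by
        rcases hmid with h' | ⟨_, h'⟩
        · exact absurd (hrk W) h'
        · exact h'
      refine ⟨hx, ?_⟩
      by_cases hz : c ∈ Ranked
      · exact Or.inr ⟨hz, hxlt.trans_le (hmax W c hzB hz)⟩
      · exact Or.inl hz
end

section
/- Equivalent class of ROLs under stability (Proposition B.1(i), sufficiency): fix a student whose feasible set B(ω) ⊆ C in each realized uncertainty ω is unaffected by her own report, and suppose submitting R gives her the stable assignment (the R-maximal feasible ranked school) in every ω. If R' is consistent with the TEPS-inferred preferences from R — i.e., (a) every school that is the assignment α(ω) for some ω is ranked in R', and (b) for any c' ranked above c in R', the pair (c, c') is not in the TEPS transitive closure — then submitting R' yields the same assignment as R in every realized uncertainty. -/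
/-- Proposition B.1(i), sufficiency: if `R'` is consistent with the TEPS-inferred
preferences from `R` — every ever-assigned school is ranked on `R'`, and `R'` never
ranks `c'` above `c` when `(c, c')` is in the TEPS transitive closure — then in every
realized uncertainty the `R'`-maximal feasible ranked school equals the assignment
under `R`. Feasible sets are exogenous to the student's report; `αR ω` denotes the
`R`-maximal feasible `R`-ranked school in state `ω` (lower rank = larger `pos`). -/
theorem stmt_9 {C : Type*} {Ω : Type*}
    (B : Ω → Set C)
    -- the ROL R
    (Ranked : Set C) (pos : C → ℕ) (hinj : Set.InjOn pos Ranked)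
    -- the ROL R'
    (Ranked' : Set C) (pos' : C → ℕ) (hinj' : Set.InjOn pos' Ranked')
    -- assignment under R: the R-maximal feasible ranked school
    (αR : Ω → C)
    (hαmem : ∀ ω, αR ω ∈ B ω)
    (hαrk : ∀ ω, αR ω ∈ Ranked)
    (hαmax : ∀ ω, ∀ c ∈ B ω, c ∈ Ranked → pos (αR ω) ≤ pos c)
    -- (a) every ever-assigned school is ranked on R'
    (hconsA : ∀ ω, αR ω ∈ Ranked')
    -- (b) R' never ranks c' above c when (c, c') is TEPS-inferred from R
    (hconsB : ∀ c c', c ∈ Ranked' → c' ∈ Ranked' → pos' c' < pos' c →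
      ¬ Relation.TransGen (fun x y => ∃ ω, x = αR ω ∧ y ∈ B ω ∧ y ≠ αR ω) c c') :
    ∀ ω, ∀ x, x ∈ B ω → x ∈ Ranked' →
      (∀ c ∈ B ω, c ∈ Ranked' → pos' x ≤ pos' c) → x = αR ω := by
  intro ω x hxB hxR' hxmax
  by_contra hne
  have hle : pos' x ≤ pos' (αR ω) := hxmax (αR ω) (hαmem ω) (hconsA ω)
  have hlt : pos' x < pos' (αR ω) :=
    lt_of_le_of_ne hle (fun h => hne (hinj' hxR' (hconsA ω) h))
  exact hconsB (αR ω) x (hconsA ω) hxR' hlt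
    (Relation.TransGen.single ⟨ω, rfl, hxB, hne⟩)
end

section
/- Equivalent class of ROLs under stability (Proposition B.1(i), necessity): with the setup above, if submitting R' yields the same assignment as R in every realized uncertainty ω, then R' is consistent with the TEPS-inferred preferences from R: every ever-assigned school is ranked in R', and R' never ranks c' above c when (c, c') belongs to the TEPS transitive closure of R. -/
/-- Proposition B.1(i), necessity: if submitting `R'` yields the same assignment as `R`
in every realized uncertainty (feasible sets being exogenous to the report), then `R'`
is consistent with the TEPS-inferred preferences from `R`: every ever-assigned school
is ranked on `R'`, and whenever `(c, c')` is in the TEPS transitive closure of `R`,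
`R'` does not rank `c'` above `c` (indeed `c` is `R'`-ranked, and if `c'` is also
`R'`-ranked then `c` is ranked strictly above `c'`). -/
theorem stmt_10 {C : Type*} {Ω : Type*}
    (B : Ω → Set C)
    -- the ROL R
    (Ranked : Set C) (pos : C → ℕ) (hinj : Set.InjOn pos Ranked)
    -- the ROL R'
    (Ranked' : Set C) (pos' : C → ℕ) (hinj' : Set.InjOn pos' Ranked')
    -- assignment under R
    (αR : Ω → C)
    (hαmem : ∀ ω, αR ω ∈ B ω)
    (hαrk : ∀ ω, αR ω ∈ Ranked)
    (hαmax : ∀ ω, ∀ c ∈ B ω, c ∈ Ranked → pos (αR ω) ≤ pos c)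
    -- assignment under R'
    (αR' : Ω → C)
    (hα'mem : ∀ ω, αR' ω ∈ B ω)
    (hα'rk : ∀ ω, αR' ω ∈ Ranked')
    (hα'max : ∀ ω, ∀ c ∈ B ω, c ∈ Ranked' → pos' (αR' ω) ≤ pos' c)
    -- R' yields the same assignment as R in every state
    (heq : ∀ ω, αR' ω = αR ω) :
    (∀ ω, αR ω ∈ Ranked') ∧
      (∀ c c', Relation.TransGen (fun x y => ∃ ω, x = αR ω ∧ y ∈ B ω ∧ y ≠ αR ω) c c' →
        c ∈ Ranked' ∧ (c' ∈ Ranked' → pos' c < pos' c')) := by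

  have hmem : ∀ ω, αR ω ∈ Ranked' := fun ω => heq ω ▸ hα'rk ω
  have base : ∀ c c', (∃ ω, c = αR ω ∧ c' ∈ B ω ∧ c' ≠ αR ω) →
      c ∈ Ranked' ∧ (c' ∈ Ranked' → pos' c < pos' c') := by
    rintro c c' ⟨ω, rfl, hB, hne⟩
    refine ⟨hmem ω, fun hc' => ?_⟩
    have hle : pos' (αR' ω) ≤ pos' c' := hα'max ω c' hB hc'
    rw [heq ω] at hle
    rcases lt_or_eq_of_le hle with h | h
    · exact h
    · exact absurd (hinj' (hmem ω) hc' h).symm hne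
  refine ⟨hmem, fun c c' h => ?_⟩
  induction h with
  | single h => exact base _ _ h
  | tail _ h ih =>
      obtain ⟨ω, rfl, hB, hne⟩ := h
      exact ⟨ih.1, fun hc' =>
        lt_trans (ih.2 (hmem ω)) ((base _ _ ⟨ω, rfl, hB, hne⟩).2 hc')⟩
end

section
/- Demand monotonicity within the raised-cutoff set: with demand defined as each type choosing its best feasible school, any type that demands some school in J = {c : p_c < p'_c} at the higher cutoffs p' still demands some (possibly different) school in J at the lower cutoffs p; consequently the aggregate demand for J satisfies Σ_{c∈J} D_c(p) ≥ Σ_{c∈J} D_c(p') plus the mass of types newly demanding schools in J. -/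
/-!
A type demanding `d ∈ J` at `p'` still finds `d` feasible at `p`, so its demand at `p` is `d` or a
strictly better school; the latter is feasible at `p` but not at `p'`, hence also in `J`.
Types with strict preferences have full measure, so up to a null set the types demanding `J`
at `p'` are among those demanding `J` at `p`, which gives the measure inequality.
-/

open MeasureTheory

/-- Type `θ = (u, s)` demands school `d` at cutoffs `q` if `d` is feasible
(`s_d > q_d`), gives positive utility, and is `u`-maximal among feasible schools with
positive utility. -/
def Demands {C : Type*} (q : C → ℝ) (d : C) (θ : (C → ℝ) × (C → ℝ)) : Prop :=
  q d < θ.2 d ∧ 0 < θ.1 d ∧ ∀ e, q e < θ.2 e → 0 < θ.1 e → θ.1 e ≤ θ.1 d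

theorem Demands.score_le_cutoff_of_lt {C : Type*} {q : C → ℝ} {d e : C}
    {θ : (C → ℝ) × (C → ℝ)} (h : Demands q d θ) (hde : θ.1 d < θ.1 e) : θ.2 e ≤ q e :=
  not_lt.1 fun he => (h.2.2 e he (h.2.1.trans hde)).not_gt hde

theorem exists_demands_of_feasible {C : Type*} [Finite C] {q : C → ℝ} {d : C}
    {θ : (C → ℝ) × (C → ℝ)} (hd : q d < θ.2 d) (hpos : 0 < θ.1 d) :
    ∃ d', Demands q d' θ ∧ θ.1 d ≤ θ.1 d' := by
  obtain ⟨d', ⟨hd', hpos'⟩, hmax⟩ :=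
    Set.exists_max_image {e | q e < θ.2 e ∧ 0 < θ.1 e} θ.1 (Set.toFinite _) ⟨d, hd, hpos⟩
  exact ⟨d', ⟨hd', hpos', fun e he hpose => hmax e ⟨he, hpose⟩⟩, hmax d ⟨hd, hpos⟩⟩

theorem exists_demands_of_demands_of_lt {C : Type*} [Finite C] {q q' : C → ℝ} {d : C}
    {θ : (C → ℝ) × (C → ℝ)} (hinj : Function.Injective θ.1) (hdJ : q d < q' d)
    (hd : Demands q' d θ) : ∃ d', q d' < q' d' ∧ Demands q d' θ := by
  obtain ⟨d', hd', hle⟩ := exists_demands_of_feasible (hdJ.trans hd.1) hd.2.1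
  refine ⟨d', ?_, hd'⟩
  rcases hle.eq_or_lt with heq | hlt
  · exact hinj heq ▸ hdJ
  · exact hd'.1.trans_le (hd.score_le_cutoff_of_lt hlt)

theorem measure_add_measure_diff_le {α : Type*} [MeasurableSpace α] {μ : Measure α}
    {s t : Set α} (hs : MeasurableSet s) (hst : μ (s \ t) = 0) : μ s + μ (t \ s) ≤ μ t := by
  rw [← measure_union' disjoint_sdiff_self_right hs, Set.union_sdiff_self]
  exact measure_mono_ae (ae_le_set.2 (by rwa [Set.union_sdiff_right]))

theorem stmt_16_general {C : Type*} [Fintype C]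
    (η : Measure ((C → ℝ) × (C → ℝ)))
    (p p' : C → ℝ)
    (hsupp : η {θ | ¬ Function.Injective θ.1} = 0)
    (hmeas : MeasurableSet {θ : (C → ℝ) × (C → ℝ) | ∃ d, p d < p' d ∧ Demands p' d θ}) :
    (∀ θ : (C → ℝ) × (C → ℝ), Function.Injective θ.1 →
      ∀ d, p d < p' d → Demands p' d θ → ∃ d', p d' < p' d' ∧ Demands p d' θ) ∧
    η {θ | ∃ d, p d < p' d ∧ Demands p' d θ} +
        η ({θ | ∃ d, p d < p' d ∧ Demands p d θ} \
           {θ | ∃ d, p d < p' d ∧ Demands p' d θ}) ≤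
      η {θ | ∃ d, p d < p' d ∧ Demands p d θ} := by
  have stays_in_J : ∀ θ : (C → ℝ) × (C → ℝ), Function.Injective θ.1 →
      ∀ d, p d < p' d → Demands p' d θ → ∃ d', p d' < p' d' ∧ Demands p d' θ :=
    fun _ hinj _ => exists_demands_of_demands_of_lt hinj
  refine ⟨stays_in_J, measure_add_measure_diff_le hmeas (measure_mono_null ?_ hsupp)⟩
  rintro θ ⟨⟨d, hdJ, hd⟩, hnot⟩ hinj
  exact hnot (stays_in_J θ hinj d hdJ hd)

/-- Demand monotonicity within the raised-cutoff set `J = {c : p_c < p'_c}`: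
(i) any type with strict preferences demanding a school in `J` at the higher cutoffs
`p'` still demands some school in `J` at `p`; (ii) consequently, if `η`-almost every
type has strict preferences, the aggregate demand for `J` at `p` is at least the
demand for `J` at `p'` plus the mass of types newly demanding schools in `J`. -/
theorem stmt_16 {C : Type*} [Fintype C]
    (η : Measure ((C → ℝ) × (C → ℝ)))
    (p p' : C → ℝ) (hpp : p ≤ p')
    (hsupp : η {θ | ¬ Function.Injective θ.1} = 0)
    (hmeas : MeasurableSet {θ : (C → ℝ) × (C → ℝ) | ∃ d, p d < p' d ∧ Demands p' d θ}) :
    (∀ θ : (C → ℝ) × (C → ℝ), Function.Injective θ.1 →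
      ∀ d, p d < p' d → Demands p' d θ → ∃ d', p d' < p' d' ∧ Demands p d' θ) ∧
    η {θ | ∃ d, p d < p' d ∧ Demands p' d θ} +
        η ({θ | ∃ d, p d < p' d ∧ Demands p d θ} \
           {θ | ∃ d, p d < p' d ∧ Demands p' d θ}) ≤
      η {θ | ∃ d, p d < p' d ∧ Demands p d θ} :=
  stmt_16_general η p p' hsupp hmeas
end

section
/- Length-one revealed trees compose transitively in order: if the revealed relations are partitioned into ordered levels P̃_1, …, P̃_m such that for (c,d) ∈ P̃_i and (c',d') ∈ P̃_j with i < j, c is ranked ahead of c' on the linear order R, and if each P̃_i consists of pairs with a common first element (the 'root'), then the iterative procedure that composes levels from m down to 1 via the rule [(x,y) ∈ P_{k} and (y,z) ∈ P_{k+1} implies add (x,z)] produces exactly the transitive closure of ∪_i P̃_i. -/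
/-- The iterative TEPS composition: `iterRel P m 0 = P̃_m` (the lowest level,
index `m−1`), and `iterRel P m (j+1)` adds level `m−1−(j+1)` together with its
one-step compositions with what has been built so far, following the rule
`Q_k = P̃_k ∪ Q_{k+1} ∪ {(x,z) : (x,y) ∈ P̃_k, (y,z) ∈ Q_{k+1}}`. -/
def iterRel {C : Type*} (P : ℕ → C → C → Prop) (m : ℕ) : ℕ → C → C → Prop
  | 0 => P (m - 1)
  | j + 1 => fun x z =>
      P (m - 1 - (j + 1)) x z ∨ iterRel P m j x z ∨
        ∃ y, P (m - 1 - (j + 1)) x y ∧ iterRel P m j y z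

/-- Length-one revealed trees compose transitively in order: if each level `i < m`
consists of the pairs `{(r_i, d) : d ∈ D_i}` with roots strictly decreasing in the
ROL order and all edges pointing strictly downward, then the downward iteration of
one-step compositions produces exactly the transitive closure of the union of the
levels. -/
theorem stmt_17 {C : Type*} [LinearOrder C] (m : ℕ) (hm : 1 ≤ m)
    (r : ℕ → C) (D : ℕ → Set C)
    (hroots : ∀ i j, i < j → j < m → r j < r i)
    (hdown : ∀ i, i < m → ∀ d ∈ D i, d < r i) :
    ∀ x y,
      iterRel (fun i a b => a = r i ∧ b ∈ D i) m (m - 1) x y ↔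
      Relation.TransGen (fun a b => ∃ i, i < m ∧ a = r i ∧ b ∈ D i) x y := by
  set P : ℕ → C → C → Prop := fun i a b => a = r i ∧ b ∈ D i with hPdef
  set E : C → C → Prop := fun a b => ∃ i, i < m ∧ a = r i ∧ b ∈ D i with hEdef
  -- roots are injective below m
  have hinj : ∀ i i', i < m → i' < m → r i = r i' → i = i' := by
    intro i i' hi hi' h
    by_contra hne
    rcases Nat.lt_or_ge i i' with h1 | h1
    · exact absurd h (ne_of_gt (hroots i i' h1 hi'))
    · have h1 : i' < i := by omega
      exact absurd h.symm (ne_of_gt (hroots i' i h1 hi))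
  have hlt : ∀ i i', i < m → i' < m → r i' < r i → i < i' := by
    intro i i' hi hi' h
    by_contra hge
    rcases Nat.lt_or_ge i' i with h1 | h1
    · exact absurd (hroots i' i h1 hi) (not_lt_of_gt h)
    · have : i = i' := by omega
      subst this; exact lt_irrefl _ h
  -- first vertex of a TransGen chain is a root
  have hstart : ∀ x y, Relation.TransGen E x y → ∃ i, i < m ∧ x = r i := by
    intro x y h
    induction h with
    | single hE => rcases hE with ⟨i, hi, hx, _⟩; exact ⟨i, hi, hx⟩
    | tail _ _ ih => exact ih
  -- single edges at admissible levels are in iterRel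
  have hmem : ∀ j i, m - 1 - j ≤ i → i < m → ∀ x y, P i x y → iterRel P m j x y := by
    intro j
    induction j with
    | zero =>
      intro i hij hi x y hp
      have : i = m - 1 := by omega
      subst this
      exact hp
    | succ k ih =>
      intro i hij hi x y hp
      rcases Nat.eq_or_lt_of_le hij with h1 | h1
      · exact Or.inl (h1 ▸ hp)
      · exact Or.inr (Or.inl (ih i (by omega) hi x y hp))
  -- forward direction
  have hfwd : ∀ j x y, iterRel P m j x y → Relation.TransGen E x y := by
    intro j
    induction j with
    | zero =>
      intro x y h
      exact Relation.TransGen.single ⟨m - 1, by omega, h⟩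
    | succ k ih =>
      intro x y h
      rcases h with h | h | ⟨w, h1, h2⟩
      · exact Relation.TransGen.single ⟨m - 1 - (k + 1), by omega, h⟩
      · exact ih x y h
      · exact Relation.TransGen.head ⟨m - 1 - (k + 1), by omega, h1⟩ (ih w y h2)
  -- backward direction
  have hbwd : ∀ j x y, Relation.TransGen E x y →
      ∀ i, m - 1 - j ≤ i → i < m → x = r i → iterRel P m j x y := by
    intro j
    induction j with
    | zero =>
      intro x y h i hij hi hx
      have hi' : i = m - 1 := by omega
      subst hi'
      revert hx
      induction h using Relation.TransGen.head_induction_on with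
      | single hE =>
        intro hx
        rcases hE with ⟨i', hi', hx', hy⟩
        have : i' = m - 1 := hinj i' (m - 1) hi' hi (hx'.symm.trans hx)
        subst this
        exact ⟨hx, hy⟩
      | head hE htail _ =>
        intro hx
        rcases hE with ⟨i', hi', hx', hy⟩
        have hii : i' = m - 1 := hinj i' (m - 1) hi' hi (hx'.symm.trans hx)
        subst hii
        obtain ⟨i'', hi'', hc⟩ := hstart _ _ htail
        have hlt1 : _ < r (m - 1) := hdown (m - 1) hi _ hy
        have : m - 1 < i'' := hlt (m - 1) i'' hi hi'' (hc ▸ hlt1)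
        omega
    | succ k ih =>
      intro x y h i hij hi hx
      rcases Nat.eq_or_lt_of_le hij with h1 | h1
      · -- i = m - 1 - (k+1): inner induction on the chain
        revert hx
        induction h using Relation.TransGen.head_induction_on with
        | single hE =>
          intro hx
          rcases hE with ⟨i', hi', hx', hy⟩
          have : i' = i := hinj i' i hi' hi (hx'.symm.trans hx)
          subst this
          refine Or.inl ?_
          rw [h1]
          exact ⟨hx', hy⟩
        | head hE htail _ =>
          intro hx
          rcases hE with ⟨i', hi', hx', hy⟩
          have hii : i' = i := hinj i' i hi' hi (hx'.symm.trans hx)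
          subst hii
          obtain ⟨i'', hi'', hc⟩ := hstart _ _ htail
          have hlt1 : _ < r i' := hdown i' hi _ hy
          have hgt : i' < i'' := hlt i' i'' hi hi'' (hc ▸ hlt1)
          have hk : iterRel P m k _ y := ih _ y htail i'' (by omega) hi'' hc
          refine Or.inr (Or.inr ⟨_, ?_, hk⟩)
          rw [h1]
          exact ⟨hx', hy⟩
      · -- i > m - 1 - (k+1): already handled at level k
        exact Or.inr (Or.inl (ih x y h i (by omega) hi hx))
  intro x y
  constructor
  · exact hfwd (m - 1) x y
  · intro h
    obtain ⟨i, hi, hx⟩ := hstart x y h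
    exact hbwd (m - 1) x y h i (by omega) hi hx
end
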